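/- arXiv:1412.8626 — 7 statements merged into one kernel-verified Lean document; each statement's English description precedes it below -/
import Mathlib

section
/- Let X be a quandle and (S_i)_{i ∈ I} a family of subquandles of X. Then the saturation of the subquandle generated by ⋃_{i ∈ I} S_i equals the subquandle generated by ⋃_{i ∈ I} c_X(S_i), where c_X(S_i) is the saturation of S_i. (The pullback closure operator is fully additive: c_X(⋁_{i} S_i) = ⋁_i c_X(S_i).) -/
/-
Every element is in the same orbit as its products `a ▷ z` and `a ▷⁻¹ z`, so a union of orbits is
closed under both operations: the saturation of any set is a subquandle. Hence the subquandle
generated by `A` lies in the saturation of `A`, and saturating it adds nothing new: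
`c(⟨A⟩) = c(A)`. As saturation commutes with unions, both sides of the theorem equal
`c(⋃ᵢ Sᵢ) = ⋃ᵢ c(Sᵢ)`, the latter being its own generated subquandle.
-/

open Quandles

/-- The paper's (right-action) quandle operation `x ◃ y`, i.e. Mathlib's `y ◃ x`.
With this convention `x ▷ x = x`, `(x ▷ y) ▷⁻¹ y = x = (x ▷⁻¹ y) ▷ y`, and
both `▷` and `▷⁻¹` are right self-distributive. -/
def rAct {Q : Type*} [Quandle Q] (x y : Q) : Q := y ◃ x

/-- The paper's (right-action) inverse quandle operation `x ◃⁻¹ y`, i.e. Mathlib's `y ◃⁻¹ x`. -/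
def rInvAct {Q : Type*} [Quandle Q] (x y : Q) : Q := y ◃⁻¹ x

local infixl:65 " ▷ " => rAct
local infixl:65 " ▷⁻¹ " => rInvAct

/-- The orbit relation `∼` on a quandle: the equivalence relation generated by the
relation `{(a, b) | ∃ z, a ▷ z = b}`; `x ∼ y` iff `x` and `y` lie in the same
connected component (orbit under the inner automorphism group). -/
def orbitRel (Q : Type*) [Quandle Q] : Q → Q → Prop :=
  Relation.EqvGen (fun a b => ∃ z : Q, a ▷ z = b)

/-- A subset of a quandle is a subquandle if it is closed under both operations. -/
def IsSubquandle {Q : Type*} [Quandle Q] (S : Set Q) : Prop :=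
  ∀ a ∈ S, ∀ b ∈ S, a ▷ b ∈ S ∧ a ▷⁻¹ b ∈ S

/-- The saturation (pullback = regular closure) of a subset `M` of a quandle:
the union of the connected components meeting `M`. -/
def saturation {Q : Type*} [Quandle Q] (M : Set Q) : Set Q :=
  {x | ∃ a ∈ M, orbitRel Q x a}

/-- The subquandle of `X` generated by a subset `A`: the smallest subquandle containing `A`. -/
def genSubquandle {Q : Type*} [Quandle Q] (A : Set Q) : Set Q :=
  ⋂₀ {V : Set Q | IsSubquandle V ∧ A ⊆ V}

section
variable {Q : Type*} [Quandle Q]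

lemma orbitRel_equivalence : Equivalence (orbitRel Q) :=
  Relation.EqvGen.is_equivalence _

lemma orbitRel_rAct (a z : Q) : orbitRel Q a (a ▷ z) :=
  Relation.EqvGen.rel _ _ ⟨z, rfl⟩

lemma orbitRel_rInvAct (a z : Q) : orbitRel Q a (a ▷⁻¹ z) :=
  Relation.EqvGen.symm _ _ (Relation.EqvGen.rel _ _ ⟨z, Rack.act_invAct_eq z a⟩)

lemma subset_saturation (M : Set Q) : M ⊆ saturation M :=
  fun x hx => ⟨x, hx, orbitRel_equivalence.refl x⟩

lemma saturation_mono {M N : Set Q} (h : M ⊆ N) : saturation M ⊆ saturation N :=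
  fun _ ⟨a, ha, hxa⟩ => ⟨a, h ha, hxa⟩

lemma saturation_saturation (M : Set Q) : saturation (saturation M) = saturation M := by
  refine Set.Subset.antisymm ?_ (subset_saturation _)
  rintro x ⟨a, ⟨m, hm, ham⟩, hxa⟩
  exact ⟨m, hm, orbitRel_equivalence.trans hxa ham⟩

lemma saturation_iUnion {ι : Type*} (M : ι → Set Q) :
    saturation (⋃ i, M i) = ⋃ i, saturation (M i) := by
  ext x
  simp only [saturation, Set.mem_iUnion, Set.mem_ofPred_eq]
  exact ⟨fun ⟨a, ⟨i, ha⟩, hxa⟩ => ⟨i, a, ha, hxa⟩, fun ⟨i, a, ha, hxa⟩ => ⟨a, ⟨i, ha⟩, hxa⟩⟩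

lemma isSubquandle_saturation (M : Set Q) : IsSubquandle (saturation M) := by
  rintro a ⟨m, hm, ham⟩ b -
  exact ⟨⟨m, hm, orbitRel_equivalence.trans (orbitRel_equivalence.symm (orbitRel_rAct a b)) ham⟩,
    ⟨m, hm, orbitRel_equivalence.trans (orbitRel_equivalence.symm (orbitRel_rInvAct a b)) ham⟩⟩

lemma subset_genSubquandle (A : Set Q) : A ⊆ genSubquandle A :=
  fun _ hx _ hV => hV.2 hx

lemma genSubquandle_subset {A V : Set Q} (hV : IsSubquandle V) (hAV : A ⊆ V) :
    genSubquandle A ⊆ V :=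
  fun _ hx => hx V ⟨hV, hAV⟩

lemma genSubquandle_eq_self {V : Set Q} (hV : IsSubquandle V) : genSubquandle V = V :=
  Set.Subset.antisymm (genSubquandle_subset hV subset_rfl) (subset_genSubquandle V)

lemma saturation_genSubquandle (A : Set Q) : saturation (genSubquandle A) = saturation A := by
  refine Set.Subset.antisymm ?_ (saturation_mono (subset_genSubquandle A))
  calc saturation (genSubquandle A)
      ⊆ saturation (saturation A) :=
        saturation_mono (genSubquandle_subset (isSubquandle_saturation A) (subset_saturation A))
    _ = saturation A := saturation_saturation A

end

theorem saturation_sup_general {X : Type*} [Quandle X] {I : Type*} (S : I → Set X) :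
    saturation (genSubquandle (⋃ i, S i)) = genSubquandle (⋃ i, saturation (S i)) := by
  rw [saturation_genSubquandle, ← saturation_iUnion,
    genSubquandle_eq_self (isSubquandle_saturation _)]

/-- The pullback closure operator is fully additive: for a family of subquandles `Sᵢ`,
the saturation of the subquandle generated by `⋃ᵢ Sᵢ` equals the subquandle generated
by `⋃ᵢ c_X(Sᵢ)`, i.e. `c_X(⋁ᵢ Sᵢ) = ⋁ᵢ c_X(Sᵢ)`. -/
theorem saturation_sup {X : Type*} [Quandle X] {I : Type*} (S : I → Set X)
    (hS : ∀ i, IsSubquandle (S i)) :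
    saturation (genSubquandle (⋃ i, S i)) = genSubquandle (⋃ i, saturation (S i)) :=
  saturation_sup_general S
end

section
/- Let X and Y be quandles, M ⊆ X a subquandle and N ⊆ Y a subquandle, and give X × Y the componentwise quandle structure. Then the saturation of M × N in X × Y equals c_X(M) × c_Y(N), the product of the saturations. (The pullback closure operator is finitely productive.) -/
/-!
Shelf homomorphisms preserve the orbit relation. The projections of `X × Y` are such
homomorphisms, and so are the slice inclusions `x ↦ (x, y)` and `y ↦ (x, y)`, because
`y ◃ y = y`. Hence `(x, y) ∼ (a, b)` iff `x ∼ a` and `y ∼ b`, which is the theorem.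
-/

open Quandles

local infixl:65 " ▷ " => rAct
local infixl:65 " ▷⁻¹ " => rInvAct

/-- The componentwise quandle structure on a product of quandles. -/
instance prodQuandle {X Y : Type*} [Quandle X] [Quandle Y] : Quandle (X × Y) where
  act p q := (p.1 ◃ q.1, p.2 ◃ q.2)
  self_distrib := by intro x y z; ext <;> exact Shelf.self_distrib
  invAct p q := (p.1 ◃⁻¹ q.1, p.2 ◃⁻¹ q.2)
  left_inv := by intro x y; ext <;> exact Rack.invAct_act_eq _ _
  right_inv := by intro x y; ext <;> exact Rack.act_invAct_eq _ _
  fix := by intro x; ext <;> exact Quandle.fix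

theorem orbitRel.map {Q R : Type*} [Quandle Q] [Quandle R] (f : Q →◃ R) {x y : Q}
    (h : orbitRel Q x y) : orbitRel R (f x) (f y) := by
  induction h with
  | rel a b hab =>
    obtain ⟨z, rfl⟩ := hab
    exact .rel _ _ ⟨f z, (f.map_act).symm⟩
  | refl => exact .refl _
  | symm _ _ _ ih => exact .symm _ _ ih
  | trans _ _ _ _ _ ih₁ ih₂ => exact .trans _ _ _ ih₁ ih₂

namespace ShelfHom

variable {X Y : Type*} [Quandle X] [Quandle Y]

def fst : X × Y →◃ X := ⟨Prod.fst, rfl⟩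

def snd : X × Y →◃ Y := ⟨Prod.snd, rfl⟩

def mkLeft (y : Y) : X →◃ X × Y := ⟨fun x => (x, y), Prod.ext rfl Quandle.fix.symm⟩

def mkRight (x : X) : Y →◃ X × Y := ⟨fun y => (x, y), Prod.ext Quandle.fix.symm rfl⟩

end ShelfHom

theorem orbitRel_prod_iff {X Y : Type*} [Quandle X] [Quandle Y] {p q : X × Y} :
    orbitRel (X × Y) p q ↔ orbitRel X p.1 q.1 ∧ orbitRel Y p.2 q.2 := by
  refine ⟨fun h => ⟨h.map ShelfHom.fst, h.map ShelfHom.snd⟩, fun ⟨h₁, h₂⟩ => ?_⟩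
  exact .trans _ (q.1, p.2) _ (h₁.map (ShelfHom.mkLeft p.2)) (h₂.map (ShelfHom.mkRight q.1))

theorem saturation_prod_general {X Y : Type*} [Quandle X] [Quandle Y]
    (M : Set X) (N : Set Y) :
    saturation (M ×ˢ N) = saturation M ×ˢ saturation N := by
  ext ⟨x, y⟩
  constructor
  · rintro ⟨⟨a, b⟩, ⟨ha, hb⟩, h⟩
    obtain ⟨hxa, hyb⟩ := orbitRel_prod_iff.mp h
    exact ⟨⟨a, ha, hxa⟩, ⟨b, hb, hyb⟩⟩
  · rintro ⟨⟨a, ha, hxa⟩, ⟨b, hb, hyb⟩⟩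
    exact ⟨(a, b), ⟨ha, hb⟩, orbitRel_prod_iff.mpr ⟨hxa, hyb⟩⟩

/-- The pullback closure operator is finitely productive: for subquandles `M ⊆ X` and
`N ⊆ Y`, the saturation of `M × N` in the product quandle `X × Y` is the product of
the saturations. -/
theorem saturation_prod {X Y : Type*} [Quandle X] [Quandle Y]
    (M : Set X) (N : Set Y) (hM : IsSubquandle M) (hN : IsSubquandle N) :
    saturation (M ×ˢ N) = saturation M ×ˢ saturation N :=
  saturation_prod_general M N
end

section
/- Let X be a quandle and give X × X the componentwise quandle structure. Then the diagonal Δ_X = {(x, x) | x ∈ X} is dense in X × X for the pullback closure operator — i.e. for every (a, b) ∈ X × X there exists x ∈ X with (a, b) ∼_{X×X} (x, x) — if and only if X is algebraically connected, i.e. a ∼_X b for all a, b ∈ X. (The c-connected quandles are exactly the algebraically connected quandles.) -/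
open Quandles

local infixl:65 " ▷ " => rAct
local infixl:65 " ▷⁻¹ " => rInvAct

namespace ShelfHom

variable {X Y : Type*} [Quandle X] [Quandle Y]

/-- The slice `x ↦ (x, b)` is a homomorphism because `b ◃ b = b`. -/
def inl (b : Y) : X →◃ X × Y := ⟨fun x => (x, b), fun {_ _} => Prod.ext rfl Quandle.fix.symm⟩

def inr (a : X) : Y →◃ X × Y := ⟨fun y => (a, y), fun {_ _} => Prod.ext Quandle.fix.symm rfl⟩

end ShelfHom

namespace orbitRel

variable {X Y : Type*} [Quandle X] [Quandle Y]

theorem equivalence : Equivalence (orbitRel X) := Relation.EqvGen.is_equivalence _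

theorem map_s7 (f : X →◃ Y) {a b : X} (h : orbitRel X a b) : orbitRel Y (f a) (f b) := by
  induction h with
  | rel a b hab =>
    obtain ⟨z, rfl⟩ := hab
    exact Relation.EqvGen.rel _ _ ⟨f z, f.map_act.symm⟩
  | refl a => exact equivalence.refl _
  | symm _ _ _ ih => exact equivalence.symm ih
  | trans _ _ _ _ _ ih₁ ih₂ => exact equivalence.trans ih₁ ih₂

theorem prod_iff {p q : X × Y} :
    orbitRel (X × Y) p q ↔ orbitRel X p.1 q.1 ∧ orbitRel Y p.2 q.2 :=
  ⟨fun h => ⟨h.map_s7 ShelfHom.fst, h.map_s7 ShelfHom.snd⟩,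
    fun ⟨h₁, h₂⟩ => equivalence.trans (h₁.map_s7 (ShelfHom.inl p.2)) (h₂.map_s7 (ShelfHom.inr q.1))⟩

end orbitRel

/-- A quandle `X` is `c`-connected (the diagonal is dense in `X × X` for the pullback
closure operator) iff it is algebraically connected. -/
theorem cConnected_iff_connected {X : Type*} [Quandle X] :
    (∀ p : X × X, ∃ x : X, orbitRel (X × X) p (x, x)) ↔
      (∀ a b : X, orbitRel X a b) := by
  simp only [orbitRel.prod_iff]
  constructor
  · intro h a b
    obtain ⟨x, hax, hbx⟩ := h (a, b)
    exact orbitRel.equivalence.trans hax (orbitRel.equivalence.symm hbx)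
  · exact fun h p => ⟨p.1, h _ _, h _ _⟩
end

section
/- A quandle X is algebraically connected (x ∼ y for all x, y ∈ X) if and only if for every trivial quandle T (a quandle with a ◃ b = a for all a, b) and every quandle homomorphism f : X → T, f is constant, i.e. f(a) = f(b) for all a, b ∈ X. (The connectedness l(Qnd*) associated with the trivial quandles is exactly the class of connected quandles.) -/
/-!
A homomorphism `f` into a trivial quandle satisfies `f (a ▷ z) = f a ▷ f z = f a`, so it is
constant on orbits; hence it is constant when `X` is connected. Conversely, the set of orbits
carries the trivial quandle structure, and the quotient map is a homomorphism: if it is constant,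
there is only one orbit.
-/

open Quandles

local infixl:65 " ▷ " => rAct
local infixl:65 " ▷⁻¹ " => rInvAct

theorem orbitRel_rAct_s9 {Q : Type*} [Quandle Q] (x z : Q) : orbitRel Q x (x ▷ z) :=
  Relation.EqvGen.rel _ _ ⟨z, rfl⟩

theorem ShelfHom.apply_eq_of_orbitRel {X T : Type*} [Quandle X] [Quandle T]
    (hT : ∀ a b : T, a ▷ b = a) (f : X →◃ T) {a b : X} (h : orbitRel X a b) : f a = f b := by
  refine (InvImage.equivalence Eq f eq_equivalence).eqvGen_iff.1 (h.mono ?_)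
  rintro x _ ⟨z, rfl⟩
  exact (hT (f x) (f z)).symm.trans (f.map_act).symm

def orbitSetoid (Q : Type*) [Quandle Q] : Setoid Q :=
  ⟨orbitRel Q, Relation.EqvGen.is_equivalence _⟩

abbrev Orbits (Q : Type*) [Quandle Q] : Type _ := Quotient (orbitSetoid Q)

instance Orbits.instQuandle (Q : Type*) [Quandle Q] : Quandle (Orbits Q) where
  act _ y := y
  self_distrib := rfl
  invAct _ y := y
  left_inv _ _ := rfl
  right_inv _ _ := rfl
  fix := rfl

theorem Orbits.rAct_eq_self {Q : Type*} [Quandle Q] (a b : Orbits Q) : a ▷ b = a := rfl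

def Orbits.mkHom (Q : Type*) [Quandle Q] : Q →◃ Orbits Q where
  toFun := Quotient.mk _
  map_act' {a b} := (Quotient.sound (orbitRel_rAct_s9 b a)).symm

/-- A quandle `X` is algebraically connected iff every quandle homomorphism from `X`
to a trivial quandle is constant (the connectedness associated with the trivial
quandles is the class of connected quandles). -/
theorem connected_iff_hom_to_trivial_constant {X : Type u} [Quandle X] :
    (∀ x y : X, orbitRel X x y) ↔
      (∀ (T : Type u) [Quandle T], (∀ a b : T, a ▷ b = a) →
        ∀ f : X →◃ T, ∀ a b : X, f a = f b) := by
  refine ⟨fun hconn T _ hT f a b => f.apply_eq_of_orbitRel hT (hconn a b), fun hconst x y => ?_⟩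
  exact Quotient.exact (hconst (Orbits X) Orbits.rAct_eq_self (Orbits.mkHom X) x y)
end

section
/- A quandle X is algebraically connected if and only if for every quandle Z having no non-trivial connected subquandles (every connected subquandle of Z has at most one element) and every quandle homomorphism f : X → Z, f is constant. (The class of connected quandles is a connectedness: Y = l(Z) = l(r(Y)).) -/
open Quandles

local infixl:65 " ▷ " => rAct
local infixl:65 " ▷⁻¹ " => rInvAct

/-- The induced quandle structure on a subquandle. -/
def inducedQuandle {Q : Type*} [Quandle Q] {S : Set Q} (h : IsSubquandle S) :
    Quandle S where
  act a b := ⟨(a : Q) ◃ (b : Q), (h b b.2 a a.2).1⟩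
  self_distrib := by intro x y z; exact Subtype.ext Shelf.self_distrib
  invAct a b := ⟨(a : Q) ◃⁻¹ (b : Q), (h b b.2 a a.2).2⟩
  left_inv := by intro x y; exact Subtype.ext (Rack.invAct_act_eq _ _)
  right_inv := by intro x y; exact Subtype.ext (Rack.act_invAct_eq _ _)
  fix := by intro x; exact Subtype.ext Quandle.fix

/-- A subset `S` of a quandle is a connected subquandle if it is a subquandle and
the induced quandle structure on `S` is algebraically connected. -/
def IsConnectedSubquandle {Q : Type*} [Quandle Q] (S : Set Q) : Prop :=
  ∃ h : IsSubquandle S, ∀ a b : S, @orbitRel S (inducedQuandle h) a b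

/-
Connected quandles map onto connected subquandles, which are points in the target.
Conversely, the orbits of `X` form a trivial quandle, in which every connected subquandle is a
point, so the quotient map to it is constant.
-/

theorem ShelfHom.map_invAct {R₁ R₂ : Type*} [Rack R₁] [Rack R₂] (f : R₁ →◃ R₂) (x y : R₁) :
    f (x ◃⁻¹ y) = f x ◃⁻¹ f y := by
  rw [← Rack.left_cancel (f x), ← f.map_act, Rack.act_invAct_eq, Rack.act_invAct_eq]

theorem isSubquandle_range {X Z : Type*} [Quandle X] [Quandle Z] (f : X →◃ Z) :
    IsSubquandle (Set.range f) := by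
  rintro _ ⟨x, rfl⟩ _ ⟨y, rfl⟩
  exact ⟨⟨y ◃ x, f.map_act⟩, ⟨y ◃⁻¹ x, f.map_invAct y x⟩⟩

theorem orbitRel_map {X Y : Type*} [Quandle X] [Quandle Y] (f : X →◃ Y) {x y : X}
    (h : orbitRel X x y) : orbitRel Y (f x) (f y) := by
  induction h with
  | rel a b hab =>
    obtain ⟨z, rfl⟩ := hab
    exact .rel _ _ ⟨f z, f.map_act.symm⟩
  | refl => exact .refl _
  | symm _ _ _ ih => exact .symm _ _ ih
  | trans _ _ _ _ _ ih₁ ih₂ => exact .trans _ _ _ ih₁ ih₂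

theorem isConnectedSubquandle_range {X Z : Type*} [Quandle X] [Quandle Z] (f : X →◃ Z)
    (hX : ∀ x y : X, orbitRel X x y) : IsConnectedSubquandle (Set.range f) := by
  let _ : Quandle (Set.range f) := inducedQuandle (isSubquandle_range f)
  let g : X →◃ Set.range f := ⟨Set.rangeFactorization f, Subtype.ext f.map_act⟩
  refine ⟨isSubquandle_range f, ?_⟩
  rintro ⟨_, x, rfl⟩ ⟨_, y, rfl⟩
  exact orbitRel_map g (hX x y)

theorem eq_of_orbitRel_of_rAct_eq {Q : Type*} [Quandle Q] (h : ∀ x z : Q, x ▷ z = x) {x y : Q}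
    (hxy : orbitRel Q x y) : x = y :=
  Relation.EqvGen.eqvGen_le (r' := Eq) (fun a _ ⟨z, hz⟩ => (h a z).symm.trans hz) x y hxy

def TrivialQuandle (α : Type*) := α

instance {α : Type*} : Quandle (TrivialQuandle α) where
  act _ b := b
  self_distrib := rfl
  invAct _ b := b
  left_inv _ _ := rfl
  right_inv _ _ := rfl
  fix := rfl

theorem TrivialQuandle.subsingleton_of_isConnectedSubquandle {α : Type*}
    (S : Set (TrivialQuandle α)) (hS : IsConnectedSubquandle S) : S.Subsingleton := by
  obtain ⟨hsub, hconn⟩ := hS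
  let _ : Quandle S := inducedQuandle hsub
  intro a ha b hb
  exact congrArg Subtype.val
    (eq_of_orbitRel_of_rAct_eq (fun _ _ => rfl) (hconn ⟨a, ha⟩ ⟨b, hb⟩))

def orbitStep (Q : Type*) [Quandle Q] (a b : Q) : Prop :=
  ∃ z : Q, a ▷ z = b

def toOrbits (X : Type*) [Quandle X] : X →◃ TrivialQuandle (Quot (orbitStep X)) where
  toFun := Quot.mk _
  map_act' {x _} := (Quot.sound ⟨x, rfl⟩).symm

/-- A quandle `X` is algebraically connected iff every quandle homomorphism from `X` to
a quandle with no non-trivial connected subquandles is constant (the class of connected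
quandles is a connectedness: `Y = l(Z) = l(r(Y))`). -/
theorem connected_iff_hom_to_disconnected_constant {X : Type u} [Quandle X] :
    (∀ x y : X, orbitRel X x y) ↔
      (∀ (Z : Type u) [Quandle Z],
        (∀ S : Set Z, IsConnectedSubquandle S → S.Subsingleton) →
        ∀ f : X →◃ Z, ∀ a b : X, f a = f b) := by
  constructor
  · intro hX Z _ hZ f a b
    exact hZ _ (isConnectedSubquandle_range f hX) ⟨a, rfl⟩ ⟨b, rfl⟩
  · intro h x y
    exact Quot.eqvGen_exact
      (h _ TrivialQuandle.subsingleton_of_isConnectedSubquandle (toOrbits X) x y)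
end

section
/- Let X be a quasi-trivial quandle, i.e. x ◃ y = x whenever y lies in the same connected component as x (y ∼ x). Then every connected subquandle of X has at most one element; in particular every quasi-trivial quandle lies in the disconnectedness associated with the class of connected quandles. -/
/-! Any two elements of a connected subquandle `S` are in the same orbit of `X`, so
quasi-triviality makes every operation `x ▷ z` with `x z ∈ S` trivial; the orbit relation of the
induced quandle on `S` is then equality, while connectedness says it is all of `S × S`. -/

open Quandles

local infixl:65 " ▷ " => rAct
local infixl:65 " ▷⁻¹ " => rInvAct

lemma val_rAct_inducedQuandle {X : Type*} [Quandle X] {S : Set X} (hS : IsSubquandle S)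
    (a b : S) : ((@rAct S (inducedQuandle hS) a b : S) : X) = (a : X) ▷ (b : X) :=
  rfl

lemma IsSubquandle.orbitRel_val {X : Type*} [Quandle X] {S : Set X} (hS : IsSubquandle S)
    {a b : S} (h : @orbitRel S (inducedQuandle hS) a b) : orbitRel X a b :=
  (InvImage.equivalence _ Subtype.val (Relation.EqvGen.is_equivalence _)).eqvGen_iff.1 <|
    h.mono fun x _ ⟨z, hz⟩ =>
      .rel _ _ ⟨z, (val_rAct_inducedQuandle hS x z).symm.trans (congrArg Subtype.val hz)⟩

lemma IsConnectedSubquandle.orbitRel {X : Type*} [Quandle X] {S : Set X}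
    (hS : IsConnectedSubquandle S) {a b : X} (ha : a ∈ S) (hb : b ∈ S) : orbitRel X a b :=
  hS.1.orbitRel_val (hS.2 ⟨a, ha⟩ ⟨b, hb⟩)

lemma eq_of_orbitRel_of_forall_rAct_eq {Q : Type*} [Quandle Q]
    (htriv : ∀ x z : Q, x ▷ z = x) {a b : Q} (h : orbitRel Q a b) : a = b :=
  Relation.EqvGen.eqvGen_le (r' := Eq) (fun x _ ⟨z, hz⟩ => (htriv x z).symm.trans hz) _ _ h

/-- Every quasi-trivial quandle (`x ◃ y = x` whenever `y ∼ x`) has no non-trivial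
connected subquandles; in particular it lies in the disconnectedness associated with
the class of connected quandles. -/
theorem quasiTrivial_no_connected_subquandle {X : Type*} [Quandle X]
    (hqt : ∀ x y : X, orbitRel X y x → x ▷ y = x) :
    ∀ S : Set X, IsConnectedSubquandle S → S.Subsingleton := by
  intro S hS a ha b hb
  let _ : Quandle S := inducedQuandle hS.1
  have htriv : ∀ x z : S, x ▷ z = x := fun x z =>
    Subtype.ext (hqt x z (hS.orbitRel z.2 x.2))
  exact congrArg Subtype.val (eq_of_orbitRel_of_forall_rAct_eq htriv (hS.2 ⟨a, ha⟩ ⟨b, hb⟩))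
end

section
/- Let X be a quandle and R, S congruences on X. Then the smallest congruence on X containing R, S, and the orbit congruence ∼ equals the smallest congruence on X containing the composites R ∘ ∼ and S ∘ ∼. (The effective closure operator corresponding to the reflection of quandles into trivial quandles satisfies c_X(R ∨ S) = c_X(R) ∨ c_X(S).) -/
open Quandles

local infixl:65 " ▷ " => rAct
local infixl:65 " ▷⁻¹ " => rInvAct

/-- A congruence on a quandle: an equivalence relation compatible with both operations. -/
def IsCongruence {Q : Type*} [Quandle Q] (R : Q → Q → Prop) : Prop :=
  Equivalence R ∧
    ∀ a b c d : Q, R a b → R c d → R (a ▷ c) (b ▷ d) ∧ R (a ▷⁻¹ c) (b ▷⁻¹ d)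

/-- The composite `R ∘ ∼` of a congruence `R` with the orbit congruence. -/
def orbComp {X : Type*} [Quandle X] (R : X → X → Prop) : X → X → Prop :=
  fun x z => ∃ y, orbitRel X x y ∧ R y z

/-- The smallest congruence containing a given relation `A` (the intersection of all
congruences containing `A`). -/
def congGen {X : Type*} [Quandle X] (A : X → X → Prop) : X → X → Prop :=
  fun x y => ∀ T : X → X → Prop, IsCongruence T → (∀ a b, A a b → T a b) → T x y

/-!
Both sides are generated congruences, so it suffices that each generating relation lies in the
other congruence. The composite `R ∘ ∼` lies in any congruence containing `R` and `∼` by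
transitivity; conversely `R ⊆ R ∘ ∼` and `S ⊆ S ∘ ∼` since `∼` is reflexive, and `∼ ⊆ R ∘ ∼`
since `R` is.
-/

section CongGen

variable {X : Type*} [Quandle X] {A B : X → X → Prop}

theorem congGen_of_rel {a b : X} (h : A a b) : congGen A a b :=
  fun _ _ hA => hA a b h

theorem congGen_trans {a b c : X} (hab : congGen A a b) (hbc : congGen A b c) :
    congGen A a c :=
  fun T hT hA => hT.1.trans (hab T hT hA) (hbc T hT hA)

theorem congGen_le_congGen (h : ∀ a b, A a b → congGen B a b) {x y : X}
    (hxy : congGen A x y) : congGen B x y :=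
  fun T hT hB => hxy T hT fun a b hab => h a b hab T hT hB

theorem congGen_eq_of_le_of_le (hAB : ∀ a b, A a b → congGen B a b)
    (hBA : ∀ a b, B a b → congGen A a b) : congGen A = congGen B := by
  funext x y
  exact propext ⟨congGen_le_congGen hAB, congGen_le_congGen hBA⟩

end CongGen

section OrbComp

variable {X : Type*} [Quandle X] {R : X → X → Prop}

theorem orbComp_of_rel {a b : X} (h : R a b) : orbComp R a b :=
  ⟨a, Relation.EqvGen.refl a, h⟩

theorem orbComp_of_orbitRel (hR : ∀ x, R x x) {a b : X} (h : orbitRel X a b) :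
    orbComp R a b :=
  ⟨b, h, hR b⟩

theorem congGen_of_orbComp {A : X → X → Prop} (hR : ∀ a b, R a b → A a b)
    (horb : ∀ a b, orbitRel X a b → A a b) {a b : X} (h : orbComp R a b) : congGen A a b :=
  let ⟨c, hac, hcb⟩ := h
  congGen_trans (congGen_of_rel (horb a c hac)) (congGen_of_rel (hR c b hcb))

end OrbComp

theorem effective_closure_join_general {X : Type*} [Quandle X]
    (R S : X → X → Prop) (hR : IsCongruence R) :
    congGen (fun a b => R a b ∨ S a b ∨ orbitRel X a b) =
      congGen (fun a b => orbComp R a b ∨ orbComp S a b) := by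
  apply congGen_eq_of_le_of_le
  · rintro a b (hab | hab | hab)
    · exact congGen_of_rel (Or.inl (orbComp_of_rel hab))
    · exact congGen_of_rel (Or.inr (orbComp_of_rel hab))
    · exact congGen_of_rel (Or.inl (orbComp_of_orbitRel hR.1.refl hab))
  · rintro a b (hab | hab)
    · exact congGen_of_orbComp (fun _ _ => Or.inl) (fun _ _ h => Or.inr (Or.inr h)) hab
    · exact congGen_of_orbComp (fun _ _ h => Or.inr (Or.inl h)) (fun _ _ h => Or.inr (Or.inr h))
        hab

/-- The effective closure operator satisfies `c_X(R ∨ S) = c_X(R) ∨ c_X(S)`: the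
smallest congruence containing `R`, `S` and the orbit congruence `∼` equals the
smallest congruence containing `R ∘ ∼` and `S ∘ ∼`. -/
theorem effective_closure_join {X : Type*} [Quandle X]
    (R S : X → X → Prop) (hR : IsCongruence R) (hS : IsCongruence S) :
    congGen (fun a b => R a b ∨ S a b ∨ orbitRel X a b) =
      congGen (fun a b => orbComp R a b ∨ orbComp S a b) :=
  effective_closure_join_general R S hR
end
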